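/- Let w be a nonempty trapezoidal word over {a,b}. The following conditions are equivalent: (1) w is open; (2) the prefix of w of length H_w − 1 (the longest repeated prefix of w) is a right special factor of w and H_w = R_w (so it is the longest right special factor of w); (3) the suffix of w of length K_w − 1 (the longest repeated suffix of w) is a left special factor of w and K_w = L_w (so it is the longest left special factor of w). -/

import Mathlib

open List

/-- Words over the two-letter alphabet {a,b}, encoded as lists of booleans
(`false` = a, `true` = b). -/
abbrev Word := List Bool

/-- The set of factors of `w` of length `n`. -/
def factorSet (w : Word) (n : ℕ) : Set Word :=
  {u | u.length = n ∧ u <:+: w}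

/-- `w` is trapezoidal if it has at most `n+1` distinct factors of length `n`, for all `n`. -/
def Trapezoidal (w : Word) : Prop :=
  ∀ n : ℕ, (factorSet w n).ncard ≤ n + 1

/-- `u` is a right special factor of `w`. -/
def RightSpecial (w u : Word) : Prop :=
  (u ++ [false]) <:+: w ∧ (u ++ [true]) <:+: w

/-- `u` is a left special factor of `w`. -/
def LeftSpecial (w u : Word) : Prop :=
  (false :: u) <:+: w ∧ (true :: u) <:+: w

/-- The number of occurrences of `u` as a factor of `w` (counted by starting position). -/
noncomputable def occ (u w : Word) : ℕ :=
  {i : ℕ | i + u.length ≤ w.length ∧ (w.drop i).take u.length = u}.ncard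

/-- `H_w`: the minimal length of a prefix of `w` occurring exactly once in `w`. -/
noncomputable def Hp (w : Word) : ℕ := sInf {n | n ≤ w.length ∧ occ (w.take n) w = 1}

/-- `K_w`: the minimal length of a suffix of `w` occurring exactly once in `w`. -/
noncomputable def Kp (w : Word) : ℕ := sInf {n | n ≤ w.length ∧ occ (w.drop (w.length - n)) w = 1}

/-- `R_w`: the minimal `n` such that `w` has no right special factor of length `n`. -/
noncomputable def Rp (w : Word) : ℕ := sInf {n | ∀ u : Word, u.length = n → ¬ RightSpecial w u}

/-- `L_w`: the minimal `n` such that `w` has no left special factor of length `n`. -/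
noncomputable def Lp (w : Word) : ℕ := sInf {n | ∀ u : Word, u.length = n → ¬ LeftSpecial w u}

/-- A word is closed if it is empty or has a factor, different from the word itself,
occurring exactly twice, as a prefix and as a suffix. -/
def ClosedWord (w : Word) : Prop :=
  w = [] ∨ ∃ u : Word, u ≠ w ∧ u <+: w ∧ u <:+ w ∧ occ u w = 2

/-- A binary word is balanced if any two factors of the same length have the same number
of occurrences of each letter, up to one. -/
def BalancedWord (w : Word) : Prop :=
  ∀ u v : Word, u <:+: w → v <:+: w → u.length = v.length →
    ∀ c : Bool, ((u.count c : ℤ) - (v.count c : ℤ)).natAbs ≤ 1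

/-- `(f,g)` is a pathological pair of `w`. -/
def PathPair (w f g : Word) : Prop :=
  f <:+: w ∧ g <:+: w ∧ f.length = g.length ∧
    2 ≤ ((f.count false : ℤ) - (g.count false : ℤ)).natAbs

/-- `p` is a period of `u`: `1 ≤ p ≤ |u|` and `u_i = u_{i+p}` whenever both sides are defined. -/
def HasPeriod (u : Word) (p : ℕ) : Prop :=
  1 ≤ p ∧ p ≤ u.length ∧ ∀ i : ℕ, i + p < u.length → u[i]? = u[i + p]?

/-- A word is central if it is empty or has two coprime periods `p`, `q`
with length `p + q - 2`. -/
def Central (u : Word) : Prop :=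
  u = [] ∨ ∃ p q : ℕ, Nat.Coprime p q ∧ _root_.HasPeriod u p ∧ _root_.HasPeriod u q ∧ u.length + 2 = p + q

/-!
Let `p` be the longest repeated prefix of `w`, of length `H_w - 1`, and `c = w[H_w - 1]`, so
that `p c` occurs only at `0`. A non-initial occurrence of `p` that is not a suffix of `w` is
followed by a letter other than `c`, so `p` is right special; if there is none, `p` is a border
occurring exactly twice and `w` is closed. Conversely, a border `u` occurring exactly twice
leaves no room for `p` to be right special: if `|u| ≤ |p|`, the non-initial occurrences of `p`
followed by a letter would be non-final occurrences of `u`; otherwise the prefix of length `H_w`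
would occur at the end.

A trapezoidal word has at most one right special factor of each length `n`: if `x t` and `y t`
both are, erase letters from the end of `w` until one of them stops being right special; at that
point the suffix of length `n` is right extendable, so every length `k ≤ n` carries a right
special factor and all factors of length `k` extend, and the complexity reaches `n + 3` at length
`n + 1`. Hence when `p` is right special, a right special `x p` cannot exist, since `x p c` would
put `p c` at a nonzero position, and `H_w = R_w`. Reversal gives the statement about suffixes.
-/

section Occurrences

variable {α : Type*} {u v w : List α} {i : ℕ}

def occurrences (u w : List α) : Set ℕ :=
  {i | ∃ s t, s.length = i ∧ s ++ u ++ t = w}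

theorem occurrences_finite (u w : List α) : (occurrences u w).Finite :=
  (Set.finite_Iic w.length).subset fun i ⟨s, t, hs, h⟩ => by
    subst hs h; simp only [Set.mem_Iic, length_append]; omega

theorem add_length_le_of_mem_occurrences (h : i ∈ occurrences u w) :
    i + u.length ≤ w.length := by
  obtain ⟨s, t, rfl, rfl⟩ := h
  simp only [length_append]; omega

theorem infix_iff_occurrences_nonempty : u <:+: w ↔ (occurrences u w).Nonempty :=
  ⟨fun ⟨s, t, h⟩ => ⟨_, s, t, rfl, h⟩, fun ⟨_, s, t, _, h⟩ => ⟨s, t, h⟩⟩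

theorem zero_mem_occurrences_iff : 0 ∈ occurrences u w ↔ u <+: w := by
  constructor
  · rintro ⟨s, t, hs, rfl⟩
    rw [List.length_eq_zero_iff.1 hs]
    exact ⟨t, rfl⟩
  · rintro ⟨t, rfl⟩
    exact ⟨[], t, rfl, rfl⟩

theorem occurrences_subset_of_prefix (h : u <+: v) : occurrences v w ⊆ occurrences u w := by
  obtain ⟨r, rfl⟩ := h
  rintro i ⟨s, t, hs, rfl⟩
  exact ⟨s, r ++ t, hs, by simp⟩

theorem add_one_mem_occurrences_of_cons {a : α} (h : i ∈ occurrences (a :: u) w) :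
    i + 1 ∈ occurrences u w := by
  obtain ⟨s, t, rfl, rfl⟩ := h
  exact ⟨s ++ [a], t, by simp, by simp⟩

theorem eq_of_mem_occurrences_concat {a b : α} (ha : i ∈ occurrences (u ++ [a]) w)
    (hb : i ∈ occurrences (u ++ [b]) w) : a = b := by
  obtain ⟨s, t, rfl, rfl⟩ := ha
  obtain ⟨s', t', hs, h⟩ := hb
  simp only [List.append_assoc] at h
  have := List.append_cancel_left (List.append_inj h hs).2
  simp only [List.singleton_append, List.cons.injEq] at this
  exact this.1.symm

theorem exists_concat_mem_occurrences (h : i ∈ occurrences u w)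
    (hi : i + u.length < w.length) : ∃ a, i ∈ occurrences (u ++ [a]) w := by
  obtain ⟨s, _ | ⟨a, t⟩, rfl, rfl⟩ := h
  · simp at hi
  · exact ⟨a, s, t, rfl, by simp⟩

theorem suffix_of_mem_occurrences (h : i ∈ occurrences u w) (hi : i + u.length = w.length) :
    u <:+ w := by
  obtain ⟨s, _ | ⟨a, t⟩, rfl, rfl⟩ := h
  · exact ⟨s, by simp⟩
  · simp at hi

theorem mem_occurrences_of_suffix (h : u <:+ w) : w.length - u.length ∈ occurrences u w := by
  obtain ⟨s, rfl⟩ := h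
  exact ⟨s, [], by simp, by simp⟩

theorem ncard_occurrences_le_reverse (u w : List α) :
    (occurrences u w).ncard ≤ (occurrences u.reverse w.reverse).ncard := by
  refine Set.ncard_le_ncard_of_injOn (fun i => w.length - u.length - i) ?_ ?_
    (occurrences_finite _ _)
  · rintro i ⟨s, t, rfl, rfl⟩
    exact ⟨t.reverse, s.reverse, by simp; omega, by simp⟩
  · intro i hi j hj hij
    have := add_length_le_of_mem_occurrences hi
    have := add_length_le_of_mem_occurrences hj
    simp only at hij
    omega

theorem ncard_occurrences_reverse (u w : List α) :
    (occurrences u.reverse w.reverse).ncard = (occurrences u w).ncard :=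
  le_antisymm (by simpa using ncard_occurrences_le_reverse u.reverse w.reverse)
    (ncard_occurrences_le_reverse u w)

end Occurrences

theorem occ_eq_ncard_occurrences (u w : Word) : occ u w = (occurrences u w).ncard := by
  unfold occ
  congr 1
  ext i
  constructor
  · rintro ⟨hi, h⟩
    refine ⟨w.take i, w.drop (i + u.length), length_take_of_le (by omega), ?_⟩
    conv_rhs => rw [← List.take_append_drop i w, ← List.take_append_drop u.length (w.drop i)]
    rw [h, List.drop_drop, List.append_assoc]
  · rintro ⟨s, t, rfl, rfl⟩
    simp

theorem closedWord_iff_occurrences_eq_pair {w : Word} :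
    ClosedWord w ↔ w = [] ∨
      ∃ u : Word, u.length < w.length ∧ occurrences u w = {0, w.length - u.length} := by
  refine or_congr_right ⟨?_, ?_⟩
  · rintro ⟨u, hne, hpre, hsuf, hocc⟩
    have hlt : u.length < w.length :=
      hpre.length_le.lt_of_ne fun h => hne (hpre.eq_of_length h)
    refine ⟨u, hlt, (Set.eq_of_subset_of_ncard_le ?_ ?_ (occurrences_finite u w)).symm⟩
    · exact Set.insert_subset (zero_mem_occurrences_iff.2 hpre)
        (Set.singleton_subset_iff.2 (mem_occurrences_of_suffix hsuf))
    · rw [← occ_eq_ncard_occurrences, hocc, Set.ncard_pair (by omega)]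
  · rintro ⟨u, hlt, hocc⟩
    have hend : w.length - u.length ∈ occurrences u w := hocc ▸ Or.inr rfl
    refine ⟨u, fun h => by simp [h] at hlt, zero_mem_occurrences_iff.1 (hocc ▸ Or.inl rfl),
      suffix_of_mem_occurrences hend (by omega), ?_⟩
    rw [occ_eq_ncard_occurrences, hocc, Set.ncard_pair (by omega)]

theorem occ_take_eq_one_iff {w : Word} {n : ℕ} :
    occ (w.take n) w = 1 ↔ occurrences (w.take n) w ⊆ {0} := by
  have h0 : 0 ∈ occurrences (w.take n) w := zero_mem_occurrences_iff.2 (take_prefix n w)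
  rw [occ_eq_ncard_occurrences, Set.ncard_eq_one]
  constructor
  · rintro ⟨a, ha⟩
    rw [ha] at h0 ⊢
    rw [h0]
  · intro h
    exact ⟨0, Set.Subset.antisymm h (Set.singleton_subset_iff.2 h0)⟩

theorem Hp_eq_sInf_occurrences (w : Word) :
    Hp w = sInf {n | n ≤ w.length ∧ occurrences (w.take n) w ⊆ {0}} := by
  simp only [Hp, occ_take_eq_one_iff]

theorem length_mem_setOf_occurrences_take (w : Word) :
    w.length ∈ {n | n ≤ w.length ∧ occurrences (w.take n) w ⊆ {0}} := by
  refine ⟨le_rfl, fun i hi => ?_⟩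
  have := add_length_le_of_mem_occurrences hi
  simp only [take_length] at this
  simp only [Set.mem_singleton_iff]
  omega

theorem Hp_le_length (w : Word) : Hp w ≤ w.length :=
  Hp_eq_sInf_occurrences w ▸ Nat.sInf_le (length_mem_setOf_occurrences_take w)

theorem eq_zero_of_mem_occurrences_take_Hp {w : Word} {i : ℕ}
    (h : i ∈ occurrences (w.take (Hp w)) w) : i = 0 := by
  have := Nat.sInf_mem ⟨_, length_mem_setOf_occurrences_take w⟩
  rw [← Hp_eq_sInf_occurrences] at this
  exact this.2 h

theorem exists_mem_occurrences_take_ne_zero {w : Word} {n : ℕ} (hn : n < Hp w) :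
    ∃ i ∈ occurrences (w.take n) w, i ≠ 0 := by
  have := Nat.notMem_of_lt_sInf (Hp_eq_sInf_occurrences w ▸ hn)
  simp only [Set.mem_ofPred_eq, not_and, Set.not_subset, Set.mem_singleton_iff] at this
  exact this (hn.le.trans (Hp_le_length w))

theorem Hp_pos {w : Word} (hw : w ≠ []) : 0 < Hp w := by
  refine Nat.pos_of_ne_zero fun h => ?_
  have h1 : 1 ∈ occurrences (w.take (Hp w)) w := by
    obtain ⟨a, v, rfl⟩ := exists_cons_of_ne_nil hw
    exact ⟨[a], v, rfl, by simp [h]⟩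
  exact one_ne_zero (eq_zero_of_mem_occurrences_take_Hp h1)

theorem take_Hp_eq_concat {w : Word} (hw : w ≠ []) :
    ∃ c, w.take (Hp w) = w.take (Hp w - 1) ++ [c] := by
  have hH := Hp_pos hw
  have hlt : Hp w - 1 < w.length := by have := Hp_le_length w; omega
  refine ⟨w[Hp w - 1], ?_⟩
  conv_lhs => rw [← Nat.sub_add_cancel hH]
  exact (List.take_concat_get' w _ hlt).symm

theorem rightSpecial_iff {w u : Word} : RightSpecial w u ↔ ∀ c, u ++ [c] <:+: w := by
  simp [RightSpecial, Bool.forall_bool]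

theorem rightSpecial_of_ne {w u : Word} {c d : Bool} (hc : u ++ [c] <:+: w)
    (hd : u ++ [d] <:+: w) (hcd : c ≠ d) : RightSpecial w u := by
  cases c <;> cases d <;> first | exact absurd rfl hcd | exact ⟨hc, hd⟩ | exact ⟨hd, hc⟩

theorem RightSpecial.infix {w u : Word} (h : RightSpecial w u) : u <:+: w :=
  (prefix_append u [false]).isInfix.trans h.1

theorem RightSpecial.of_suffix {w u v : Word} (h : RightSpecial w u) (hv : v <:+ u) :
    RightSpecial w v := by
  obtain ⟨x, rfl⟩ := hv
  exact rightSpecial_iff.2 fun c =>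
    (infix_append x (v ++ [c]) []).trans (by simpa using rightSpecial_iff.1 h c)

theorem RightSpecial.exists_mem_occurrences_ne_zero {w u : Word} (h : RightSpecial w u) :
    ∃ i ∈ occurrences u w, i ≠ 0 ∧ i + u.length < w.length := by
  obtain ⟨i, hi⟩ := infix_iff_occurrences_nonempty.1 h.1
  obtain ⟨j, hj⟩ := infix_iff_occurrences_nonempty.1 h.2
  have hij : i ≠ j := fun hij => Bool.false_ne_true (eq_of_mem_occurrences_concat hi (hij ▸ hj))
  have hlt : ∀ {k c}, k ∈ occurrences (u ++ [c]) w → k + u.length < w.length := fun hk => by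
    have := add_length_le_of_mem_occurrences hk
    simp only [length_append, length_singleton] at this
    omega
  have hsub : ∀ c : Bool, occurrences (u ++ [c]) w ⊆ occurrences u w := fun _ =>
    occurrences_subset_of_prefix (prefix_append u _)
  by_cases hi0 : i = 0
  · exact ⟨j, hsub _ hj, by omega, hlt hj⟩
  · exact ⟨i, hsub _ hi, hi0, hlt hi⟩

theorem rightSpecial_take_Hp_of_not_closedWord {w : Word} (hw : w ≠ [])
    (hopen : ¬ ClosedWord w) :
    RightSpecial w (w.take (Hp w - 1)) := by
  have hH := Hp_pos hw
  obtain ⟨c, hc⟩ := take_Hp_eq_concat hw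
  set p := w.take (Hp w - 1)
  have hcp : p ++ [c] <:+: w := hc ▸ (take_prefix _ w).isInfix
  by_contra hrs
  -- a non-final occurrence of `p` is followed by `c`, hence it is the occurrence at `0`
  have hocc : ∀ i ∈ occurrences p w, i = 0 ∨ i + p.length = w.length := by
    intro i hi
    rcases (add_length_le_of_mem_occurrences hi).lt_or_eq with hlt | heq
    · obtain ⟨d, hd⟩ := exists_concat_mem_occurrences hi hlt
      obtain rfl : d = c := by
        by_contra hdc
        exact hrs (rightSpecial_of_ne (infix_iff_occurrences_nonempty.2 ⟨i, hd⟩) hcp hdc)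
      exact Or.inl (eq_zero_of_mem_occurrences_take_Hp (hc ▸ hd))
    · exact Or.inr heq
  obtain ⟨j, hj, hj0⟩ := exists_mem_occurrences_take_ne_zero (by omega : Hp w - 1 < Hp w)
  have hjend := (hocc j hj).resolve_left hj0
  refine hopen (closedWord_iff_occurrences_eq_pair.2
    (Or.inr ⟨p, by omega, Set.Subset.antisymm ?_ ?_⟩))
  · intro i hi
    rcases hocc i hi with h | h
    · exact Or.inl h
    · exact Or.inr (by simp only [Set.mem_singleton_iff]; omega)
  · refine Set.insert_subset (zero_mem_occurrences_iff.2 (take_prefix _ w)) ?_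
    rw [Set.singleton_subset_iff, show w.length - p.length = j by omega]
    exact hj

theorem not_rightSpecial_take_Hp_of_closedWord {w : Word} (hw : w ≠ []) (hcl : ClosedWord w) :
    ¬ RightSpecial w (w.take (Hp w - 1)) := by
  intro hrs
  have hHw := Hp_le_length w
  obtain rfl | ⟨u, hlt, hocc⟩ := closedWord_iff_occurrences_eq_pair.1 hcl
  · exact hw rfl
  have hupre : u <+: w := zero_mem_occurrences_iff.1 (hocc ▸ Or.inl rfl)
  have hend : w.length - u.length ∈ occurrences u w := hocc ▸ Or.inr rfl
  rcases le_or_gt u.length (Hp w - 1) with hle | hgt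
  · obtain ⟨i, hi, hi0, hifin⟩ := hrs.exists_mem_occurrences_ne_zero
    have hup : u <+: w.take (Hp w - 1) :=
      prefix_of_prefix_length_le hupre (take_prefix _ w)
        (by rw [length_take_of_le (by omega)]; exact hle)
    have hiu : i ∈ occurrences u w := occurrences_subset_of_prefix hup hi
    rw [hocc] at hiu
    rcases hiu with h | h
    · exact hi0 h
    · simp only [Set.mem_singleton_iff] at h
      rw [length_take_of_le (by omega)] at hifin
      omega
  · have hHu : w.take (Hp w) <+: u :=
      prefix_of_prefix_length_le (take_prefix _ w) hupre
        (by rw [length_take_of_le hHw]; omega)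
    have := eq_zero_of_mem_occurrences_take_Hp (occurrences_subset_of_prefix hHu hend)
    omega

theorem rightSpecial_take_Hp_iff {w : Word} (hw : w ≠ []) :
    RightSpecial w (w.take (Hp w - 1)) ↔ ¬ ClosedWord w :=
  ⟨fun h hcl => not_rightSpecial_take_Hp_of_closedWord hw hcl h,
    rightSpecial_take_Hp_of_not_closedWord hw⟩

theorem factorSet_finite (w : Word) (n : ℕ) : (factorSet w n).Finite :=
  (List.finite_length_eq Bool n).subset fun _ hu => hu.1

theorem Trapezoidal.of_infix {v w : Word} (h : Trapezoidal w) (hvw : v <:+: w) :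
    Trapezoidal v := fun n =>
  (Set.ncard_le_ncard (fun _ hu => And.intro hu.1 (hu.2.trans hvw))
    (factorSet_finite w n)).trans (h n)

theorem Trapezoidal.reverse {w : Word} (h : Trapezoidal w) : Trapezoidal w.reverse := by
  intro n
  have : factorSet w.reverse n = List.reverse '' factorSet w n := by
    ext u
    refine ⟨fun hu => ⟨u.reverse, ⟨by simpa using hu.1, by simpa using reverse_infix.2 hu.2⟩,
      reverse_reverse u⟩, ?_⟩
    rintro ⟨v, hv, rfl⟩
    exact ⟨by simpa using hv.1, reverse_infix.2 hv.2⟩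
  rw [this, Set.ncard_image_of_injective _ reverse_injective]
  exact h n

theorem exists_concat_infix_of_suffix {α : Type*} {s u w : List α} {a : α} (hs : s <:+ w)
    (hsa : s ++ [a] <:+: w) (hu : u <:+: w) (hus : u.length ≤ s.length) :
    ∃ b, u ++ [b] <:+: w := by
  obtain ⟨p, _ | ⟨b, q⟩, rfl⟩ := hu
  · obtain ⟨r, rfl⟩ := suffix_of_suffix_length_le ⟨p, by simp⟩ hs hus
    exact ⟨a, (infix_append r _ []).trans (by simpa using hsa)⟩
  · exact ⟨b, p, q, by simp⟩

theorem ncard_factorSet_add_card_le {w : Word} {n : ℕ}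
    (hext : ∀ u ∈ factorSet w n, ∃ c, u ++ [c] <:+: w) {S : Finset Word}
    (hS : ∀ u ∈ S, u.length = n ∧ RightSpecial w u) :
    (factorSet w n).ncard + S.card ≤ (factorSet w (n + 1)).ncard := by
  classical
  set F := (factorSet_finite w n).toFinset
  set E := (factorSet_finite w (n + 1)).toFinset
  rw [Set.ncard_eq_toFinset_card _ (factorSet_finite w n),
    Set.ncard_eq_toFinset_card _ (factorSet_finite w (n + 1))]
  have hSF : S ⊆ F := fun u hu =>
    (Set.Finite.mem_toFinset _).2 (And.intro (hS u hu).1 (hS u hu).2.infix)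
  have hfiber : ∀ u ∈ F, ∀ c, u ++ [c] <:+: w → u ++ [c] ∈ E.filter (·.take n = u) := by
    intro u hu c hc
    have hu : u.length = n := ((Set.Finite.mem_toFinset _).1 hu).1
    refine Finset.mem_filter.2 ⟨(Set.Finite.mem_toFinset _).2 (And.intro ?_ hc), ?_⟩
    · simp [hu]
    · simp [← hu]
  calc F.card + S.card = ∑ u ∈ F, (1 + if u ∈ S then 1 else 0) := by
        rw [Finset.sum_add_distrib, Finset.sum_boole, Finset.filter_mem_eq_inter,
          Finset.inter_eq_right.2 hSF]
        simp
    _ ≤ ∑ u ∈ F, (E.filter (·.take n = u)).card := by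
        refine Finset.sum_le_sum fun u hu => ?_
        split_ifs with huS
        · change 2 ≤ _
          rw [← Finset.card_pair (show u ++ [false] ≠ u ++ [true] by simp)]
          exact Finset.card_le_card (Finset.insert_subset (hfiber u hu _ (hS u huS).2.1)
            (Finset.singleton_subset_iff.2 (hfiber u hu _ (hS u huS).2.2)))
        · obtain ⟨c, hc⟩ := hext u ((Set.Finite.mem_toFinset _).1 hu)
          exact Finset.card_pos.2 ⟨_, hfiber u hu c hc⟩
    _ = E.card := by
        refine (Finset.card_eq_sum_card_fiberwise fun x hx => ?_).symm
        obtain ⟨hx, hxw⟩ := (Set.Finite.mem_toFinset _).1 hx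
        exact (Set.Finite.mem_toFinset _).2
          (And.intro (by simp [hx]) ((take_prefix n x).isInfix.trans hxw))

theorem Trapezoidal.rightSpecial_eq_of_le_length_suffix {w s u₁ u₂ : Word} {a : Bool}
    (htrap : Trapezoidal w) (hs : s <:+ w) (hsa : s ++ [a] <:+: w)
    (hlen : u₁.length = u₂.length) (hle : u₁.length ≤ s.length)
    (h₁ : RightSpecial w u₁) (h₂ : RightSpecial w u₂) : u₁ = u₂ := by
  by_contra hne
  have hext : ∀ k ≤ u₁.length, ∀ u ∈ factorSet w k, ∃ c, u ++ [c] <:+: w :=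
    fun k hk u hu => exists_concat_infix_of_suffix hs hsa hu.2 (by rw [hu.1]; omega)
  have hgrow : ∀ k ≤ u₁.length, k + 1 ≤ (factorSet w k).ncard := by
    intro k
    induction k with
    | zero =>
      exact fun _ => (Set.ncard_pos (factorSet_finite w 0)).2 ⟨[], rfl, nil_infix⟩
    | succ k ih =>
      intro hk
      have := ncard_factorSet_add_card_le (hext k (by omega)) (S := {u₁.drop (u₁.length - k)})
        (by simpa using And.intro (by omega) (h₁.of_suffix (drop_suffix _ _)))
      rw [Finset.card_singleton] at this
      have := ih (by omega)
      omega
  have hpair := ncard_factorSet_add_card_le (hext _ le_rfl) (S := {u₁, u₂})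
    (by simp [h₁, h₂, hlen])
  rw [Finset.card_pair hne] at hpair
  have := hgrow _ le_rfl
  have := htrap (u₁.length + 1)
  omega

theorem exists_concat_infix_of_cons_suffix {α : Type*} {s w : List α} {x y : α}
    (hx : x :: s <:+ w) (hy : y :: s <:+: w) (hxy : x ≠ y) : ∃ b, s ++ [b] <:+: w := by
  obtain ⟨p, _ | ⟨b, q⟩, rfl⟩ := hy
  · have hy : y :: s <:+ p ++ y :: s ++ [] := ⟨p, by simp⟩
    have := (suffix_of_suffix_length_le hx hy (by simp)).eq_of_length (by simp)
    exact absurd (cons.inj this).1 hxy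
  · exact ⟨b, p ++ [y], q, by simp⟩

-- If `x t` is right special in `v a` but not in `v`, some `x t c` occurs only as a suffix of
-- `v a`, while `y t c` occurs elsewhere: the suffix `t c` is right extendable.
theorem Trapezoidal.eq_of_rightSpecial_cons {v t : Word} {a x y : Bool}
    (htrap : Trapezoidal (v ++ [a])) (hx : RightSpecial (v ++ [a]) (x :: t))
    (hy : RightSpecial (v ++ [a]) (y :: t)) (hxv : ¬ RightSpecial v (x :: t)) : x = y := by
  by_contra hxy
  obtain ⟨c, hcv⟩ := not_forall.1 (mt rightSpecial_iff.2 hxv)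
  have hsuf : x :: (t ++ [c]) <:+ v ++ [a] :=
    (infix_concat_iff.1 (rightSpecial_iff.1 hx c)).resolve_right hcv
  obtain ⟨b, hb⟩ :=
    exists_concat_infix_of_cons_suffix hsuf (by simpa using rightSpecial_iff.1 hy c) hxy
  exact hxy (cons.inj (htrap.rightSpecial_eq_of_le_length_suffix ((suffix_cons x _).trans hsuf)
    hb (by simp) (by simp) hx hy)).1

theorem Trapezoidal.rightSpecial_unique {w : Word} (htrap : Trapezoidal w) {u₁ u₂ : Word}
    (hlen : u₁.length = u₂.length) (h₁ : RightSpecial w u₁) (h₂ : RightSpecial w u₂) :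
    u₁ = u₂ := by
  induction w using List.reverseRecOn generalizing u₁ u₂ with
  | nil => simpa [RightSpecial] using h₁.1
  | append_singleton v a ih =>
    induction u₁ generalizing u₂ with
    | nil => exact (length_eq_zero_iff.1 hlen.symm).symm
    | cons x t iht =>
      obtain ⟨y, t', rfl⟩ := exists_cons_of_length_eq_add_one hlen.symm
      obtain rfl : t = t' :=
        iht (by simpa using hlen) (h₁.of_suffix (suffix_cons x t))
          (h₂.of_suffix (suffix_cons y t'))
      by_cases hv : RightSpecial v (x :: t) ∧ RightSpecial v (y :: t)
      · exact ih (htrap.of_infix (prefix_append v [a]).isInfix) hlen hv.1 hv.2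
      rcases not_and_or.1 hv with hxv | hyv
      · rw [htrap.eq_of_rightSpecial_cons h₁ h₂ hxv]
      · rw [htrap.eq_of_rightSpecial_cons h₂ h₁ hyv]

theorem Rp_eq_of_rightSpecial {w u : Word} (hu : RightSpecial w u)
    (hmax : ∀ v : Word, v.length = u.length + 1 → ¬ RightSpecial w v) :
    Rp w = u.length + 1 := by
  refine le_antisymm (Nat.sInf_le hmax) (le_csInf ⟨_, hmax⟩ fun k hk => ?_)
  by_contra! hlt
  exact hk (u.drop (u.length - k)) (by simp; omega) (hu.of_suffix (drop_suffix _ _))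

theorem Trapezoidal.not_rightSpecial_of_length_eq_Hp {w v : Word} (htrap : Trapezoidal w)
    (hw : w ≠ []) (hp : RightSpecial w (w.take (Hp w - 1))) (hv : v.length = Hp w) :
    ¬ RightSpecial w v := by
  intro hrs
  have hH := Hp_pos hw
  have := Hp_le_length w
  obtain ⟨x, t, rfl⟩ := exists_cons_of_length_eq_add_one (by omega : v.length = Hp w - 1 + 1)
  obtain rfl : t = w.take (Hp w - 1) :=
    htrap.rightSpecial_unique (by simp at hv ⊢; omega) (hrs.of_suffix (suffix_cons x t)) hp
  obtain ⟨c, hc⟩ := take_Hp_eq_concat hw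
  obtain ⟨i, hi⟩ := infix_iff_occurrences_nonempty.1 (rightSpecial_iff.1 hrs c)
  have hi' : i + 1 ∈ occurrences (w.take (Hp w)) w := by
    rw [hc]
    exact add_one_mem_occurrences_of_cons hi
  exact Nat.succ_ne_zero i (eq_zero_of_mem_occurrences_take_Hp hi')

theorem Trapezoidal.not_closedWord_iff {w : Word} (htrap : Trapezoidal w) (hw : w ≠ []) :
    ¬ ClosedWord w ↔ RightSpecial w (w.take (Hp w - 1)) ∧ Hp w = Rp w := by
  refine ⟨fun hopen => ?_, fun h => (rightSpecial_take_Hp_iff hw).1 h.1⟩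
  have hp := (rightSpecial_take_Hp_iff hw).2 hopen
  refine ⟨hp, ?_⟩
  have hH := Hp_pos hw
  have hlen : (w.take (Hp w - 1)).length + 1 = Hp w := by
    rw [length_take_of_le (by have := Hp_le_length w; omega)]; omega
  rw [Rp_eq_of_rightSpecial hp fun v hv => htrap.not_rightSpecial_of_length_eq_Hp hw hp
    (hv.trans hlen), hlen]

theorem leftSpecial_iff_rightSpecial_reverse {w u : Word} :
    LeftSpecial w u ↔ RightSpecial w.reverse u.reverse := by
  simp [LeftSpecial, RightSpecial, ← reverse_infix (l₁ := false :: u),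
    ← reverse_infix (l₁ := true :: u)]

theorem closedWord_reverse_iff {w : Word} : ClosedWord w.reverse ↔ ClosedWord w := by
  suffices ∀ w : Word, ClosedWord w → ClosedWord w.reverse from
    ⟨fun h => by simpa using this _ h, this w⟩
  rintro w (rfl | ⟨u, hne, hpre, hsuf, hocc⟩)
  · exact Or.inl rfl
  · refine Or.inr ⟨u.reverse, by simpa using hne, reverse_prefix.2 hsuf,
      reverse_suffix.2 hpre, ?_⟩
    rwa [occ_eq_ncard_occurrences, ncard_occurrences_reverse, ← occ_eq_ncard_occurrences]

theorem Kp_eq_Hp_reverse (w : Word) : Kp w = Hp w.reverse := by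
  simp only [Kp, Hp, length_reverse, take_reverse, occ_eq_ncard_occurrences,
    ncard_occurrences_reverse]

theorem Lp_eq_Rp_reverse (w : Word) : Lp w = Rp w.reverse := by
  simp only [Lp, Rp, leftSpecial_iff_rightSpecial_reverse]
  congr 1
  ext n
  exact ⟨fun h v hv => by simpa using h v.reverse (by simpa using hv),
    fun h u hu => h u.reverse (by simpa using hu)⟩

/-- Characterization of open trapezoidal words (Proposition 19 of the paper). -/
theorem open_trapezoidal_tfae (w : Word) (hne : w ≠ []) (htrap : Trapezoidal w) :
    [ ¬ ClosedWord w,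
      RightSpecial w (w.take (Hp w - 1)) ∧ Hp w = Rp w,
      LeftSpecial w (w.drop (w.length - (Kp w - 1))) ∧ Kp w = Lp w
    ].TFAE := by
  tfae_have 1 ↔ 2 := htrap.not_closedWord_iff hne
  tfae_have 1 ↔ 3 := by
    rw [← closedWord_reverse_iff, htrap.reverse.not_closedWord_iff (by simpa using hne)]
    simp only [leftSpecial_iff_rightSpecial_reverse, Kp_eq_Hp_reverse, Lp_eq_Rp_reverse,
      take_reverse]
  tfae_finish
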